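/- arXiv:2108.03776 — 2 statements merged into one kernel-verified Lean document; each statement's English description precedes it below -/
import Mathlib

section
/- For every ϱ > 0 there exists a constant C > 0 depending only on ϱ with the following property: for every ϱ-shape-regular triangle T, every cut configuration (D, E, n, T⁺, T⁻) as in the setup, and every pair of affine maps v⁺, v⁻ : ℝ² → ℝ² that agree at every point of [D,E], the componentwise Crouzeix–Raviart interpolant π ṽ of the piecewise function ṽ (equal to v± on T±) satisfies ‖∇(π ṽ)‖_F² · |T| ≤ C (‖∇v⁺‖_F² |T⁺| + ‖∇v⁻‖_F² |T⁻|). -/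
open MeasureTheory Pointwise

noncomputable section

namespace StokesIFE

/-- Euclidean inner product on `ℝ²`. -/
def dot (x y : Fin 2 → ℝ) : ℝ := x 0 * y 0 + x 1 * y 1

/-- Euclidean length of a vector of `ℝ²`. -/
def len (x : Fin 2 → ℝ) : ℝ := Real.sqrt (dot x x)

/-- Strain tensor `ε(A) = (A + Aᵀ)/2`. -/
def eps (A : Matrix (Fin 2) (Fin 2) ℝ) : Matrix (Fin 2) (Fin 2) ℝ :=
  (2⁻¹ : ℝ) • (A + A.transpose)

/-- Cauchy stress tensor `σ(μ, A, q) = 2 μ ε(A) − q I₂`. -/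
def sig (μ : ℝ) (A : Matrix (Fin 2) (Fin 2) ℝ) (q : ℝ) : Matrix (Fin 2) (Fin 2) ℝ :=
  (2 * μ) • eps A - q • (1 : Matrix (Fin 2) (Fin 2) ℝ)

/-- Mean value of `u` over the segment `[P, Q]` with respect to arclength,
expressed through the affine parametrization of the segment. -/
def edgeMean (P Q : Fin 2 → ℝ) (u : (Fin 2 → ℝ) → ℝ) : ℝ :=
  ∫ s in (0:ℝ)..1, u (P + s • (Q - P))

/-- Two-dimensional Lebesgue area of a subset of `ℝ²`. -/
def area (s : Set (Fin 2 → ℝ)) : ℝ := (volume s).toReal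

/-- Squared Frobenius norm of a 2×2 matrix. -/
def frobSq (A : Matrix (Fin 2) (Fin 2) ℝ) : ℝ := ∑ i : Fin 2, ∑ j : Fin 2, (A i j) ^ 2

/-- A triangle `T = conv{A₁, A₂, A₃}` cut by the segment `[D, E]`, where
`D` lies in the open edge `(A₂, A₃)`, `E` lies in the open edge `(A₁, A₃)`,
and `n` is the unit normal of `E − D` pointing towards `A₃`. -/
structure CutTriangle where
  A₁ : Fin 2 → ℝ
  A₂ : Fin 2 → ℝ
  A₃ : Fin 2 → ℝ
  D : Fin 2 → ℝ
  E : Fin 2 → ℝ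
  n : Fin 2 → ℝ
  indep : AffineIndependent ℝ ![A₁, A₂, A₃]
  hD : D ∈ openSegment ℝ A₂ A₃
  hE : E ∈ openSegment ℝ A₁ A₃
  hn_unit : dot n n = 1
  hn_orth : dot n (E - D) = 0
  hn_sign : 0 < dot n (A₃ - D)

namespace CutTriangle

variable (c : CutTriangle)

/-- Tangent vector `t = (n₂, −n₁)`, the rotation of `n` by `−π/2`. -/
def t : Fin 2 → ℝ := ![c.n 1, -(c.n 0)]

/-- The closed triangle. -/
def T : Set (Fin 2 → ℝ) := convexHull ℝ {c.A₁, c.A₂, c.A₃}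

/-- The part of the triangle on the `+` side of the cut. -/
def Tplus : Set (Fin 2 → ℝ) := c.T ∩ {x | 0 ≤ dot c.n (x - c.D)}

/-- The part of the triangle on the `−` side of the cut. -/
def Tminus : Set (Fin 2 → ℝ) := c.T ∩ {x | dot c.n (x - c.D) ≤ 0}

/-- The piecewise linear function `w(x) = max(⟨n, x − D⟩, 0)`. -/
def w (x : Fin 2 → ℝ) : ℝ := max (dot c.n (x - c.D)) 0

/-- `(g, b)` represents the Crouzeix–Raviart interpolant `x ↦ ⟨g, x⟩ + b` of `u` on `T`:
an affine map whose mean value over each of the three edges coincides with that of `u`. -/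
def IsCR (u : (Fin 2 → ℝ) → ℝ) (g : Fin 2 → ℝ) (b : ℝ) : Prop :=
  edgeMean c.A₂ c.A₃ (fun x => dot g x + b) = edgeMean c.A₂ c.A₃ u ∧
  edgeMean c.A₁ c.A₃ (fun x => dot g x + b) = edgeMean c.A₁ c.A₃ u ∧
  edgeMean c.A₁ c.A₂ (fun x => dot g x + b) = edgeMean c.A₁ c.A₂ u

/-- The componentwise Crouzeix–Raviart interpolant `x ↦ Mπ x + bπ` of a vector-valued `u`. -/
def IsCRvec (u : (Fin 2 → ℝ) → Fin 2 → ℝ) (Mπ : Matrix (Fin 2) (Fin 2) ℝ)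
    (bπ : Fin 2 → ℝ) : Prop :=
  ∀ j : Fin 2, c.IsCR (fun x => u x j) (Mπ j) (bπ j)

/-- The piecewise velocity: `x ↦ Mp x + bp` on the `+` side and `x ↦ Mm x + bm`
on the `−` side. -/
def vtilde (Mp : Matrix (Fin 2) (Fin 2) ℝ) (bp : Fin 2 → ℝ)
    (Mm : Matrix (Fin 2) (Fin 2) ℝ) (bm : Fin 2 → ℝ) (x : Fin 2 → ℝ) : Fin 2 → ℝ :=
  if 0 ≤ dot c.n (x - c.D) then Mp.mulVec x + bp else Mm.mulVec x + bm

/-- The seven local degrees of freedom: edge means of the two velocity components over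
the edges `e₁ = [A₂,A₃]`, `e₂ = [A₁,A₃]`, `e₃ = [A₁,A₂]`, and the mean of the
piecewise-constant pressure over `T`. -/
def dof (Mp : Matrix (Fin 2) (Fin 2) ℝ) (bp : Fin 2 → ℝ)
    (Mm : Matrix (Fin 2) (Fin 2) ℝ) (bm : Fin 2 → ℝ) (qp qm : ℝ) : Fin 7 → ℝ :=
  ![edgeMean c.A₂ c.A₃ (fun x => c.vtilde Mp bp Mm bm x 0),
    edgeMean c.A₁ c.A₃ (fun x => c.vtilde Mp bp Mm bm x 0),
    edgeMean c.A₁ c.A₂ (fun x => c.vtilde Mp bp Mm bm x 0),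
    edgeMean c.A₂ c.A₃ (fun x => c.vtilde Mp bp Mm bm x 1),
    edgeMean c.A₁ c.A₃ (fun x => c.vtilde Mp bp Mm bm x 1),
    edgeMean c.A₁ c.A₂ (fun x => c.vtilde Mp bp Mm bm x 1),
    (area c.Tplus * qp + area c.Tminus * qm) / area c.T]

/-- A local IFE pair: affine velocities `v± = Mp/Mm · x + bp/bm` and constant pressures
`q±` satisfying the stress-jump condition (J1), continuity of the velocity on `[D,E]` (J2)
and continuity of the divergence (J3). -/
def IsIFEPair (μp μm : ℝ) (Mp : Matrix (Fin 2) (Fin 2) ℝ) (bp : Fin 2 → ℝ)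
    (Mm : Matrix (Fin 2) (Fin 2) ℝ) (bm : Fin 2 → ℝ) (qp qm : ℝ) : Prop :=
  (sig μp Mp qp).mulVec c.n = (sig μm Mm qm).mulVec c.n ∧
  (∀ x ∈ segment ℝ c.D c.E, Mp.mulVec x + bp = Mm.mulVec x + bm) ∧
  Mp.trace = Mm.trace

/-- The diameter of the triangle (its longest edge). -/
def hT : ℝ := max (len (c.A₂ - c.A₁)) (max (len (c.A₃ - c.A₁)) (len (c.A₃ - c.A₂)))

/-- The perimeter of the triangle. -/
def perim : ℝ := len (c.A₂ - c.A₁) + len (c.A₃ - c.A₁) + len (c.A₃ - c.A₂)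

/-- The inradius of the triangle, `r_T = 2|T| / perimeter`. -/
def rT : ℝ := 2 * area c.T / c.perim

/-- `ϱ`-shape-regularity: `h_T ≤ ϱ r_T`. -/
def ShapeReg (ϱ : ℝ) : Prop := c.hT ≤ ϱ * c.rT

/-- Arclength of the part of the edge `[P,Q]` lying on the `+` side of the cut. -/
def edgeLenPlus (P Q : Fin 2 → ℝ) : ℝ :=
  len (Q - P) *
    (volume {s : ℝ | s ∈ Set.Icc (0:ℝ) 1 ∧ 0 ≤ dot c.n (P + s • (Q - P) - c.D)}).toReal

/-- Arclength of the part of the edge `[P,Q]` lying on the `−` side of the cut. -/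
def edgeLenMinus (P Q : Fin 2 → ℝ) : ℝ :=
  len (Q - P) *
    (volume {s : ℝ | s ∈ Set.Icc (0:ℝ) 1 ∧ dot c.n (P + s • (Q - P) - c.D) ≤ 0}).toReal

/-- Total arclength of `∂T ∩ T⁺`. -/
def bdryLenPlus : ℝ :=
  c.edgeLenPlus c.A₂ c.A₃ + c.edgeLenPlus c.A₁ c.A₃ + c.edgeLenPlus c.A₁ c.A₂

/-- Total arclength of `∂T ∩ T⁻`. -/
def bdryLenMinus : ℝ :=
  c.edgeLenMinus c.A₂ c.A₃ + c.edgeLenMinus c.A₁ c.A₃ + c.edgeLenMinus c.A₁ c.A₂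

end CutTriangle

def det2 (u v : Fin 2 → ℝ) : ℝ := u 0 * v 1 - u 1 * v 0

-- ===================== auxiliary lemmas =====================

lemma dot_combo (n D P Q : Fin 2 → ℝ) {α β : ℝ} (h : α + β = 1) :
    dot n (α • P + β • Q - D) = α * dot n (P - D) + β * dot n (Q - D) := by
  simp only [dot, Pi.add_apply, Pi.sub_apply, Pi.smul_apply, smul_eq_mul]
  linear_combination (n 0 * D 0 + n 1 * D 1) * h

lemma integral_linear (A B : ℝ) : ∫ s in (0:ℝ)..1, (A + s * B) = A + B / 2 := by
  rw [intervalIntegral.integral_add (f := fun _ => A) (g := fun s : ℝ => s * B)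
    (continuous_const.intervalIntegrable _ _)
    ((continuous_id.mul continuous_const).intervalIntegrable _ _),
    intervalIntegral.integral_const,
    intervalIntegral.integral_mul_const (r := B) (f := fun x : ℝ => x), integral_id]
  norm_num
  ring

lemma integral_linear' (A B s₀ : ℝ) :
    ∫ s in s₀..(1:ℝ), (A + s * B) = (1 - s₀) * A + (1 - s₀^2) / 2 * B := by
  rw [intervalIntegral.integral_add (f := fun _ => A) (g := fun s : ℝ => s * B)
    (continuous_const.intervalIntegrable _ _)
    ((continuous_id.mul continuous_const).intervalIntegrable _ _),
    intervalIntegral.integral_const,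
    intervalIntegral.integral_mul_const (r := B) (f := fun x : ℝ => x), integral_id]
  simp only [smul_eq_mul]
  ring

lemma edgeMean_affine (g : Fin 2 → ℝ) (b : ℝ) (P Q : Fin 2 → ℝ) :
    edgeMean P Q (fun x => dot g x + b)
      = (g 0 * P 0 + g 1 * P 1 + (g 0 * Q 0 + g 1 * Q 1)) / 2 + b := by
  unfold edgeMean
  have h : ∀ s : ℝ, dot g (P + s • (Q - P)) + b
      = (dot g P + b) + s * (dot g Q - dot g P) := by
    intro s
    simp only [dot, Pi.add_apply, Pi.sub_apply, Pi.smul_apply, smul_eq_mul]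
    ring
  simp only [h]
  rw [integral_linear]
  simp only [dot]
  ring

lemma integral_max_nonpos {α β : ℝ} (h0 : α ≤ 0) (h1 : α + β ≤ 0) :
    ∫ s in (0:ℝ)..1, max (α + s * β) 0 = 0 := by
  rw [intervalIntegral.integral_congr (g := fun _ => (0:ℝ))]
  · simp
  · intro s hs
    rw [Set.uIcc_of_le (by norm_num : (0:ℝ) ≤ 1)] at hs
    have : α + s * β ≤ 0 := by nlinarith [hs.1, hs.2]
    exact max_eq_right this

lemma integral_max_cross {α β : ℝ} (h0 : α < 0) (h1 : 0 < α + β) :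
    ∫ s in (0:ℝ)..1, max (α + s * β) 0 = (α + β) ^ 2 / (2 * β) := by
  have hβ : 0 < β := by linarith
  set s₀ : ℝ := -α / β with hs₀
  have hs₀0 : 0 < s₀ := div_pos (by linarith) hβ
  have hs₀1 : s₀ < 1 := by rw [div_lt_one hβ]; linarith
  have hs₀β : s₀ * β = -α := by rw [hs₀]; field_simp
  have hcont : Continuous (fun s : ℝ => max (α + s * β) 0) :=
    (continuous_const.add (continuous_id.mul continuous_const)).max continuous_const
  have hsplit := intervalIntegral.integral_add_adjacent_intervals (a := (0:ℝ)) (b := s₀)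
    (c := 1) (f := fun s => max (α + s * β) 0) (μ := volume)
    (hcont.intervalIntegrable _ _) (hcont.intervalIntegrable _ _)
  have e1 : ∫ s in (0:ℝ)..s₀, max (α + s * β) 0 = 0 := by
    rw [intervalIntegral.integral_congr (g := fun _ => (0:ℝ))]
    · simp
    · intro s hs
      rw [Set.uIcc_of_le hs₀0.le] at hs
      have hsβ : s * β ≤ s₀ * β := mul_le_mul_of_nonneg_right hs.2 hβ.le
      have : α + s * β ≤ 0 := by rw [hs₀β] at hsβ; linarith
      exact max_eq_right this
  have e2 : ∫ s in s₀..(1:ℝ), max (α + s * β) 0 = (α + β) ^ 2 / (2 * β) := by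
    rw [intervalIntegral.integral_congr (g := fun s => α + s * β)]
    · rw [integral_linear']
      have hβ' : β ≠ 0 := ne_of_gt hβ
      rw [hs₀]
      field_simp
      ring
    · intro s hs
      rw [Set.uIcc_of_le hs₀1.le] at hs
      have hsβ : s₀ * β ≤ s * β := mul_le_mul_of_nonneg_right hs.1 hβ.le
      have : 0 ≤ α + s * β := by rw [hs₀β] at hsβ; linarith
      exact max_eq_left this
  rw [e1, e2] at hsplit
  rw [← hsplit]; ring

lemma edgeMean_jump (m : Fin 2 → ℝ) (b : ℝ) (n D : Fin 2 → ℝ) (A : ℝ) (P Q : Fin 2 → ℝ) :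
    edgeMean P Q (fun x => dot m x + b + max (dot n (x - D)) 0 * A) =
      (dot m P + dot m Q) / 2 + b +
        A * ∫ s in (0:ℝ)..1, max (dot n (P - D) + s * dot n (Q - P)) 0 := by
  unfold edgeMean
  have h : ∀ s : ℝ, dot m (P + s • (Q - P)) + b + max (dot n (P + s • (Q - P) - D)) 0 * A
      = ((dot m P + b) + s * (dot m Q - dot m P))
        + (max (dot n (P - D) + s * dot n (Q - P)) 0) * A := by
    intro s
    have h1 : dot m (P + s • (Q - P)) = dot m P + s * (dot m Q - dot m P) := by
      simp only [dot, Pi.add_apply, Pi.sub_apply, Pi.smul_apply, smul_eq_mul]; ring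
    have h2 : dot n (P + s • (Q - P) - D) = dot n (P - D) + s * dot n (Q - P) := by
      simp only [dot, Pi.add_apply, Pi.sub_apply, Pi.smul_apply, smul_eq_mul]; ring
    rw [h1, h2]; ring
  simp only [h]
  have hc1 : Continuous fun s : ℝ => (dot m P + b) + s * (dot m Q - dot m P) :=
    continuous_const.add (continuous_id.mul continuous_const)
  have hc2 : Continuous fun s : ℝ =>
      (max (dot n (P - D) + s * dot n (Q - P)) 0) * A :=
    (((continuous_const.add (continuous_id.mul continuous_const)).max
      continuous_const).mul continuous_const)
  rw [intervalIntegral.integral_add (f := fun s : ℝ => (dot m P + b) + s * (dot m Q - dot m P))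
    (g := fun s : ℝ => (max (dot n (P - D) + s * dot n (Q - P)) 0) * A)
    (hc1.intervalIntegrable _ _) (hc2.intervalIntegrable _ _),
    integral_linear,
    intervalIntegral.integral_mul_const (r := A)
      (f := fun s : ℝ => max (dot n (P - D) + s * dot n (Q - P)) 0)]
  ring

lemma mulVec2 (M : Matrix (Fin 2) (Fin 2) ℝ) (x : Fin 2 → ℝ) (j : Fin 2) :
    M.mulVec x j = M j 0 * x 0 + M j 1 * x 1 := by
  simp [Matrix.mulVec, dotProduct, Fin.sum_univ_two]

/-- standard triangle -/
def stdTri : Set (Fin 2 → ℝ) := convexHull ℝ {0, ![1, 0], ![0, 1]}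

lemma mem_stdTri {p : Fin 2 → ℝ} :
    p ∈ stdTri ↔ 0 ≤ p 0 ∧ 0 ≤ p 1 ∧ p 0 + p 1 ≤ 1 := by
  constructor
  · intro hp
    have hsub : stdTri ⊆ {x : Fin 2 → ℝ | 0 ≤ x 0 ∧ 0 ≤ x 1 ∧ x 0 + x 1 ≤ 1} := by
      apply convexHull_min
      · rintro x (rfl | rfl | rfl) <;> norm_num
      · intro x hx y hy α β hα hβ hαβ
        simp only [Set.mem_setOf_eq, Pi.add_apply, Pi.smul_apply, smul_eq_mul] at *
        refine ⟨by nlinarith [hx.1, hy.1], by nlinarith [hx.2.1, hy.2.1],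
          by nlinarith [hx.2.2, hy.2.2]⟩
    exact hsub hp
  · rintro ⟨h0, h1, h2⟩
    have := Finset.centerMass_mem_convexHull (R := ℝ) (E := Fin 2 → ℝ)
      (s := ({0, ![1,0], ![0,1]} : Set (Fin 2 → ℝ)))
      (Finset.univ : Finset (Fin 3))
      (w := ![1 - p 0 - p 1, p 0, p 1])
      (by intro i _; fin_cases i <;> simp <;> linarith)
      (by simp [Fin.sum_univ_three]; linarith)
      (z := ![0, ![1,0], ![0,1]])
      (by intro i _; fin_cases i <;> simp)
    convert this using 1
    · rfl
    unfold Finset.centerMass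
    have hsum : ∑ i, (![1 - p 0 - p 1, p 0, p 1] : Fin 3 → ℝ) i = 1 := by
      simp [Fin.sum_univ_three]; ring
    rw [hsum]
    funext i
    fin_cases i <;> simp [Fin.sum_univ_three] <;> ring

/-- the affine parametrization of a triangle -/
lemma tri_image (P u v : Fin 2 → ℝ) :
    convexHull ℝ {P, P + u, P + v}
      = (fun q : Fin 2 → ℝ => P + q 0 • u + q 1 • v) '' stdTri := by
  set M : Matrix (Fin 2) (Fin 2) ℝ := Matrix.of ![![u 0, v 0], ![u 1, v 1]] with hM
  set L : (Fin 2 → ℝ) →ₗ[ℝ] (Fin 2 → ℝ) := Matrix.toLin' M with hL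
  set f : (Fin 2 → ℝ) →ᵃ[ℝ] (Fin 2 → ℝ) :=
    L.toAffineMap + AffineMap.const ℝ (Fin 2 → ℝ) P with hf
  have hfx : ∀ x, f x = P + x 0 • u + x 1 • v := by
    intro x
    have : f x = L x + P := rfl
    rw [this, hL, Matrix.toLin'_apply]
    funext i
    fin_cases i <;>
      simp [hM, Matrix.mulVec, dotProduct, Fin.sum_univ_two] <;> ring
  have himg : (fun q : Fin 2 → ℝ => P + q 0 • u + q 1 • v) '' stdTri = f '' stdTri := by
    apply Set.image_congr
    intro x _
    rw [hfx]
  rw [himg, stdTri, AffineMap.image_convexHull]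
  congr 1
  rw [Set.image_insert_eq, Set.image_insert_eq, Set.image_singleton]
  rw [hfx, hfx, hfx]
  norm_num

lemma volume_tri (P u v : Fin 2 → ℝ) :
    volume (convexHull ℝ {P, P + u, P + v})
      = ENNReal.ofReal |det2 u v| * volume stdTri := by
  rw [tri_image]
  set M : Matrix (Fin 2) (Fin 2) ℝ := Matrix.of ![![u 0, v 0], ![u 1, v 1]] with hM
  set L : (Fin 2 → ℝ) →ₗ[ℝ] (Fin 2 → ℝ) := Matrix.toLin' M with hL
  have hLx : ∀ x : Fin 2 → ℝ, x 0 • u + x 1 • v = L x := by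
    intro x
    rw [hL, Matrix.toLin'_apply]
    funext i
    fin_cases i <;>
      simp [hM, Matrix.mulVec, dotProduct, Fin.sum_univ_two] <;> ring
  have h1 : (fun q : Fin 2 → ℝ => P + q 0 • u + q 1 • v) '' stdTri
      = P +ᵥ (L '' stdTri) := by
    rw [← Set.image_vadd, Set.image_image]
    apply Set.image_congr
    intro x _
    rw [← hLx]
    simp [vadd_eq_add]
    abel
  rw [h1, measure_vadd, Measure.addHaar_image_linearMap, hL, LinearMap.det_toLin',
    Matrix.det_fin_two]
  congr 2
  simp only [hM, Matrix.of_apply, det2]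
  norm_num [Matrix.cons_val_zero, Matrix.cons_val_one]
  ring_nf

lemma volume_tri' (A B C : Fin 2 → ℝ) :
    volume (convexHull ℝ {A, B, C})
      = ENNReal.ofReal |det2 (B - A) (C - A)| * volume stdTri := by
  have h : ({A, B, C} : Set (Fin 2 → ℝ)) = {A, A + (B - A), A + (C - A)} := by
    norm_num
  rw [h, volume_tri]

lemma stdTri_compact : IsCompact stdTri :=
  (Set.toFinite _).isCompact_convexHull ℝ

lemma det2_ne_zero {A₁ A₂ A₃ : Fin 2 → ℝ} (h : AffineIndependent ℝ ![A₁, A₂, A₃]) :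
    det2 (A₂ - A₁) (A₃ - A₁) ≠ 0 := by
  intro hdet
  rw [affineIndependent_iff_not_collinear] at h
  apply h
  rw [collinear_iff_exists_forall_eq_smul_vadd]
  set u := A₂ - A₁ with hu
  set v := A₃ - A₁ with hv
  by_cases hu0 : u = 0
  · refine ⟨A₁, v, ?_⟩
    rintro p ⟨i, rfl⟩
    fin_cases i
    · exact ⟨0, by simp⟩
    · refine ⟨0, ?_⟩
      have : A₂ = A₁ := by
        have := sub_eq_zero.mp (hu ▸ hu0)
        exact this
      simp [this]
    · exact ⟨1, by simp [hv, vadd_eq_add]⟩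
  · refine ⟨A₁, u, ?_⟩
    rintro p ⟨i, rfl⟩
    fin_cases i
    · exact ⟨0, by simp⟩
    · exact ⟨1, by simp [hu, vadd_eq_add]⟩
    · have hcomp : u 0 ≠ 0 ∨ u 1 ≠ 0 := by
        by_contra hc
        push_neg at hc
        apply hu0
        funext i; fin_cases i <;> simp [hc.1, hc.2]
      rcases hcomp with h0 | h1
      · refine ⟨v 0 / u 0, ?_⟩
        funext i
        fin_cases i
        · show A₃ 0 = v 0 / u 0 * u 0 + A₁ 0
          field_simp
          simp [hv]
        · show A₃ 1 = v 0 / u 0 * u 1 + A₁ 1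
          have : v 1 * u 0 = v 0 * u 1 := by
            simp only [det2] at hdet; linarith
          have hv1 : v 1 = A₃ 1 - A₁ 1 := by simp [hv]
          field_simp
          linear_combination this - u 0 * hv1
      · refine ⟨v 1 / u 1, ?_⟩
        funext i
        fin_cases i
        · show A₃ 0 = v 1 / u 1 * u 0 + A₁ 0
          have : v 0 * u 1 = v 1 * u 0 := by
            simp only [det2] at hdet; linarith
          have hv0 : v 0 = A₃ 0 - A₁ 0 := by simp [hv]
          field_simp
          linear_combination this - u 1 * hv0
        · show A₃ 1 = v 1 / u 1 * u 1 + A₁ 1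
          field_simp
          simp [hv]

lemma convex_sq_combo {θ m p : ℝ} (h0 : 0 ≤ θ) (h1 : θ ≤ 1) :
    (m + θ * p) ^ 2 ≤ θ * (m + p) ^ 2 + (1 - θ) * m ^ 2 := by
  nlinarith [mul_nonneg (mul_nonneg h0 (by linarith : (0:ℝ) ≤ 1 - θ)) (sq_nonneg p)]


set_option maxHeartbeats 2000000 in
/-- stability of the CR interpolant of piecewise affine functions: for every
`ϱ > 0` there is `C > 0` depending only on `ϱ` such that on every `ϱ`-shape-regular cut
triangle and for all affine `v±` agreeing on `[D,E]`, the componentwise CR interpolant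
`π ṽ` (represented by `Mπ, bπ`) satisfies
`‖∇(π ṽ)‖_F² |T| ≤ C (‖∇v⁺‖_F² |T⁺| + ‖∇v⁻‖_F² |T⁻|)`. -/
theorem statement9 (ϱ : ℝ) (hϱ : 0 < ϱ) :
    ∃ C : ℝ, 0 < C ∧ ∀ (c : CutTriangle), c.ShapeReg ϱ →
      ∀ (Mp Mm Mπ : Matrix (Fin 2) (Fin 2) ℝ) (bp bm bπ : Fin 2 → ℝ),
        (∀ x ∈ segment ℝ c.D c.E, Mp.mulVec x + bp = Mm.mulVec x + bm) →
        c.IsCRvec (c.vtilde Mp bp Mm bm) Mπ bπ →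
        frobSq Mπ * area c.T ≤
          C * (frobSq Mp * area c.Tplus + frobSq Mm * area c.Tminus) := by
  refine ⟨1, one_pos, ?_⟩
  intro c _hreg Mp Mm Mπ bp bm bπ hjump hCR
  obtain ⟨a₂, b₂, ha₂, hb₂0, hab₂, hDdef⟩ := c.hD
  obtain ⟨a₁, b₁, ha₁, hb₁0, hab₁, hEdef⟩ := c.hE
  have hb₂e : b₂ = 1 - a₂ := by linarith
  subst hb₂e
  have hb₁e : b₁ = 1 - a₁ := by linarith
  subst hb₁e
  have ha₂1 : a₂ < 1 := by linarith
  have ha₁1 : a₁ < 1 := by linarith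
  have hn : c.n 0 * c.n 0 + c.n 1 * c.n 1 = 1 := c.hn_unit
  have hφ₃ : 0 < dot c.n (c.A₃ - c.D) := c.hn_sign
  have hφ₃' : dot c.n (c.A₃ - c.D) ≠ 0 := ne_of_gt hφ₃
  have hD' : ∀ i, c.D i = a₂ * c.A₂ i + (1 - a₂) * c.A₃ i := by
    intro i; rw [← hDdef]; simp
  have hE' : ∀ i, c.E i = a₁ * c.A₁ i + (1 - a₁) * c.A₃ i := by
    intro i; rw [← hEdef]; simp
  have hφD : a₂ * dot c.n (c.A₂ - c.D) + (1 - a₂) * dot c.n (c.A₃ - c.D) = 0 := by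
    have h := dot_combo c.n c.D c.A₂ c.A₃ (show a₂ + (1 - a₂) = 1 by ring)
    rw [hDdef] at h
    have h0 : dot c.n (c.D - c.D) = 0 := by simp [dot]
    rw [h0] at h
    linarith
  have hφE : a₁ * dot c.n (c.A₁ - c.D) + (1 - a₁) * dot c.n (c.A₃ - c.D) = 0 := by
    have h := dot_combo c.n c.D c.A₁ c.A₃ (show a₁ + (1 - a₁) = 1 by ring)
    rw [hEdef] at h
    rw [c.hn_orth] at h
    linarith
  have h1e : a₁ * dot c.n (c.A₁ - c.D) = (a₁ - 1) * dot c.n (c.A₃ - c.D) := by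
    linear_combination hφE
  have h2e : a₂ * dot c.n (c.A₂ - c.D) = (a₂ - 1) * dot c.n (c.A₃ - c.D) := by
    linear_combination hφD
  have hφ₂neg : dot c.n (c.A₂ - c.D) < 0 := by
    nlinarith [h2e, mul_pos (show (0:ℝ) < 1 - a₂ by linarith) hφ₃, ha₂]
  have hφ₁neg : dot c.n (c.A₁ - c.D) < 0 := by
    nlinarith [h1e, mul_pos (show (0:ℝ) < 1 - a₁ by linarith) hφ₃, ha₁]
  have hEDdot : c.n 0 * (c.E 0 - c.D 0) + c.n 1 * (c.E 1 - c.D 1) = 0 := by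
    have h := c.hn_orth
    simp only [dot, Pi.sub_apply] at h
    linarith
  have hdet : det2 (c.A₂ - c.A₁) (c.A₃ - c.A₁) ≠ 0 := det2_ne_zero c.indep
  have hED0g : c.E 0 - c.D 0
      = (c.n 1 * (c.E 0 - c.D 0) - c.n 0 * (c.E 1 - c.D 1)) * c.n 1 := by
    linear_combination c.n 0 * hEDdot - (c.E 0 - c.D 0) * hn
  have hED1g : c.E 1 - c.D 1
      = -((c.n 1 * (c.E 0 - c.D 0) - c.n 0 * (c.E 1 - c.D 1)) * c.n 0) := by
    linear_combination c.n 1 * hEDdot - (c.E 1 - c.D 1) * hn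
  have hct : (c.n 1 * (c.E 0 - c.D 0) - c.n 0 * (c.E 1 - c.D 1)) ≠ 0 := by
    intro h
    have hED0 : c.E 0 - c.D 0 = 0 := by rw [hED0g, h]; ring
    have hED1 : c.E 1 - c.D 1 = 0 := by rw [hED1g, h]; ring
    have e0 : a₂ * (c.A₂ 0 - c.A₁ 0) + (a₁ - a₂) * (c.A₃ 0 - c.A₁ 0) = 0 := by
      linear_combination hE' 0 - hD' 0 - hED0
    have e1 : a₂ * (c.A₂ 1 - c.A₁ 1) + (a₁ - a₂) * (c.A₃ 1 - c.A₁ 1) = 0 := by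
      linear_combination hE' 1 - hD' 1 - hED1
    have hdz : a₂ * det2 (c.A₂ - c.A₁) (c.A₃ - c.A₁) = 0 := by
      simp only [det2, Pi.sub_apply]
      linear_combination (c.A₃ 1 - c.A₁ 1) * e0 - (c.A₃ 0 - c.A₁ 0) * e1
    rcases mul_eq_zero.mp hdz with h' | h'
    · exact absurd h' (ne_of_gt ha₂)
    · exact hdet h'
  -- jump representation
  set avv : Fin 2 → ℝ :=
    fun j => (Mp j 0 - Mm j 0) * c.n 0 + (Mp j 1 - Mm j 1) * c.n 1 with havv
  have havj : ∀ j, avv j = (Mp j 0 - Mm j 0) * c.n 0 + (Mp j 1 - Mm j 1) * c.n 1 :=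
    fun j => rfl
  have hjD := hjump c.D (left_mem_segment ℝ c.D c.E)
  have hjE := hjump c.E (right_mem_segment ℝ c.D c.E)
  have hkeyj : ∀ j : Fin 2,
      (Mp j 0 - Mm j 0) * c.n 1 - (Mp j 1 - Mm j 1) * c.n 0 = 0 := by
    intro j
    have h1 := congrFun hjD j
    have h2 := congrFun hjE j
    simp only [Pi.add_apply, mulVec2] at h1 h2
    have hd : (Mp j 0 - Mm j 0) * (c.E 0 - c.D 0)
        + (Mp j 1 - Mm j 1) * (c.E 1 - c.D 1) = 0 := by
      linear_combination h2 - h1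
    have hmul : (c.n 1 * (c.E 0 - c.D 0) - c.n 0 * (c.E 1 - c.D 1))
        * ((Mp j 0 - Mm j 0) * c.n 1 - (Mp j 1 - Mm j 1) * c.n 0) = 0 := by
      linear_combination hd - (Mp j 0 - Mm j 0) * hED0g - (Mp j 1 - Mm j 1) * hED1g
    exact (mul_eq_zero.mp hmul).resolve_left hct
  have hMpm0 : ∀ j : Fin 2, Mp j 0 = Mm j 0 + avv j * c.n 0 := by
    intro j
    linear_combination c.n 1 * hkeyj j - (Mp j 0 - Mm j 0) * hn - c.n 0 * havj j
  have hMpm1 : ∀ j : Fin 2, Mp j 1 = Mm j 1 + avv j * c.n 1 := by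
    intro j
    linear_combination (-(c.n 0)) * hkeyj j - (Mp j 1 - Mm j 1) * hn - c.n 1 * havj j
  have hbpm : ∀ j : Fin 2, bp j = bm j - avv j * (c.n 0 * c.D 0 + c.n 1 * c.D 1) := by
    intro j
    have h1 := congrFun hjD j
    simp only [Pi.add_apply, mulVec2] at h1
    linear_combination h1 - c.D 0 * hMpm0 j - c.D 1 * hMpm1 j
  -- pointwise description of vtilde
  have hvt : ∀ x : Fin 2 → ℝ, ∀ j : Fin 2, c.vtilde Mp bp Mm bm x j
      = dot (Mm j) x + bm j + max (dot c.n (x - c.D)) 0 * avv j := by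
    intro x j
    unfold CutTriangle.vtilde
    split_ifs with hx
    · rw [max_eq_left hx]
      simp only [Pi.add_apply, mulVec2, dot, Pi.sub_apply]
      linear_combination x 0 * hMpm0 j + x 1 * hMpm1 j + hbpm j
    · rw [max_eq_right (le_of_not_ge hx)]
      simp only [Pi.add_apply, mulVec2, dot]
      ring
  have hvte : ∀ P Q : Fin 2 → ℝ, ∀ j : Fin 2,
      edgeMean P Q (fun x => c.vtilde Mp bp Mm bm x j)
        = (Mm j 0 * P 0 + Mm j 1 * P 1 + (Mm j 0 * Q 0 + Mm j 1 * Q 1)) / 2 + bm j +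
          avv j * ∫ s in (0:ℝ)..1, max (dot c.n (P - c.D) + s * dot c.n (Q - P)) 0 := by
    intro P Q j
    have hfun : (fun x => c.vtilde Mp bp Mm bm x j)
        = fun x => dot (Mm j) x + bm j + max (dot c.n (x - c.D)) 0 * avv j :=
      funext fun x => hvt x j
    rw [hfun, edgeMean_jump,
      show dot (Mm j) P = Mm j 0 * P 0 + Mm j 1 * P 1 from rfl,
      show dot (Mm j) Q = Mm j 0 * Q 0 + Mm j 1 * Q 1 from rfl]
  -- the three edge integrals of the cut function w
  have h32 : dot c.n (c.A₃ - c.A₂) = dot c.n (c.A₃ - c.D) - dot c.n (c.A₂ - c.D) := by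
    simp only [dot, Pi.sub_apply]; ring
  have h31 : dot c.n (c.A₃ - c.A₁) = dot c.n (c.A₃ - c.D) - dot c.n (c.A₁ - c.D) := by
    simp only [dot, Pi.sub_apply]; ring
  have h21 : dot c.n (c.A₂ - c.A₁) = dot c.n (c.A₂ - c.D) - dot c.n (c.A₁ - c.D) := by
    simp only [dot, Pi.sub_apply]; ring
  have ha₂S : a₂ * (dot c.n (c.A₃ - c.D) - dot c.n (c.A₂ - c.D))
      = dot c.n (c.A₃ - c.D) := by linear_combination -h2e
  have ha₁S : a₁ * (dot c.n (c.A₃ - c.D) - dot c.n (c.A₁ - c.D))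
      = dot c.n (c.A₃ - c.D) := by linear_combination -h1e
  have hI₁ : (∫ s in (0:ℝ)..1,
        max (dot c.n (c.A₂ - c.D) + s * dot c.n (c.A₃ - c.A₂)) 0)
      = a₂ * dot c.n (c.A₃ - c.D) / 2 := by
    rw [h32, integral_max_cross hφ₂neg (by linarith)]
    rw [div_eq_div_iff
      (by linarith : (2 * (dot c.n (c.A₃ - c.D) - dot c.n (c.A₂ - c.D)) : ℝ) ≠ 0)
      (by norm_num : (2:ℝ) ≠ 0)]
    linear_combination (-2 * dot c.n (c.A₃ - c.D)) * ha₂S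
  have hI₂ : (∫ s in (0:ℝ)..1,
        max (dot c.n (c.A₁ - c.D) + s * dot c.n (c.A₃ - c.A₁)) 0)
      = a₁ * dot c.n (c.A₃ - c.D) / 2 := by
    rw [h31, integral_max_cross hφ₁neg (by linarith)]
    rw [div_eq_div_iff
      (by linarith : (2 * (dot c.n (c.A₃ - c.D) - dot c.n (c.A₁ - c.D)) : ℝ) ≠ 0)
      (by norm_num : (2:ℝ) ≠ 0)]
    linear_combination (-2 * dot c.n (c.A₃ - c.D)) * ha₁S
  have hI₃ : (∫ s in (0:ℝ)..1,
        max (dot c.n (c.A₁ - c.D) + s * dot c.n (c.A₂ - c.A₁)) 0) = 0 := by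
    rw [h21]
    exact integral_max_nonpos hφ₁neg.le (by linarith)
  -- the gradient of the interpolant
  have hMπ0 : ∀ j : Fin 2, Mπ j 0 = Mm j 0 + (a₁ * a₂) * avv j * c.n 0 := by
    intro j
    obtain ⟨hc1, hc2, hc3⟩ := hCR j
    rw [edgeMean_affine, hvte, hI₁] at hc1
    rw [edgeMean_affine, hvte, hI₂] at hc2
    rw [edgeMean_affine, hvte, hI₃] at hc3
    have heqv : (Mπ j 0 - Mm j 0) * (c.A₃ 0 - c.A₁ 0)
        + (Mπ j 1 - Mm j 1) * (c.A₃ 1 - c.A₁ 1)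
        = avv j * (a₂ * dot c.n (c.A₃ - c.D)) := by
      linear_combination 2 * hc1 - 2 * hc3
    have heqw : (Mπ j 0 - Mm j 0) * (c.A₃ 0 - c.A₂ 0)
        + (Mπ j 1 - Mm j 1) * (c.A₃ 1 - c.A₂ 1)
        = avv j * (a₁ * dot c.n (c.A₃ - c.D)) := by
      linear_combination 2 * hc2 - 2 * hc3
    have hnv : c.n 0 * (c.A₃ 0 - c.A₁ 0) + c.n 1 * (c.A₃ 1 - c.A₁ 1)
        = dot c.n (c.A₃ - c.D) - dot c.n (c.A₁ - c.D) := by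
      simp only [dot, Pi.sub_apply]; ring
    have hnw : c.n 0 * (c.A₃ 0 - c.A₂ 0) + c.n 1 * (c.A₃ 1 - c.A₂ 1)
        = dot c.n (c.A₃ - c.D) - dot c.n (c.A₂ - c.D) := by
      simp only [dot, Pi.sub_apply]; ring
    have hd1 : (Mπ j 0 - Mm j 0 - a₁ * a₂ * avv j * c.n 0) * (c.A₃ 0 - c.A₁ 0)
        + (Mπ j 1 - Mm j 1 - a₁ * a₂ * avv j * c.n 1) * (c.A₃ 1 - c.A₁ 1) = 0 := by
      linear_combination heqv - (a₁ * a₂ * avv j) * hnv - (a₂ * avv j) * ha₁S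
    have hd2 : (Mπ j 0 - Mm j 0 - a₁ * a₂ * avv j * c.n 0) * (c.A₃ 0 - c.A₂ 0)
        + (Mπ j 1 - Mm j 1 - a₁ * a₂ * avv j * c.n 1) * (c.A₃ 1 - c.A₂ 1) = 0 := by
      linear_combination heqw - (a₁ * a₂ * avv j) * hnw - (a₁ * avv j) * ha₂S
    have h0 : (Mπ j 0 - Mm j 0 - a₁ * a₂ * avv j * c.n 0)
        * det2 (c.A₂ - c.A₁) (c.A₃ - c.A₁) = 0 := by
      simp only [det2, Pi.sub_apply]
      linear_combination (c.A₃ 1 - c.A₂ 1) * hd1 - (c.A₃ 1 - c.A₁ 1) * hd2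
    have := (mul_eq_zero.mp h0).resolve_right hdet
    linear_combination this
  have hMπ1 : ∀ j : Fin 2, Mπ j 1 = Mm j 1 + (a₁ * a₂) * avv j * c.n 1 := by
    intro j
    obtain ⟨hc1, hc2, hc3⟩ := hCR j
    rw [edgeMean_affine, hvte, hI₁] at hc1
    rw [edgeMean_affine, hvte, hI₂] at hc2
    rw [edgeMean_affine, hvte, hI₃] at hc3
    have heqv : (Mπ j 0 - Mm j 0) * (c.A₃ 0 - c.A₁ 0)
        + (Mπ j 1 - Mm j 1) * (c.A₃ 1 - c.A₁ 1)
        = avv j * (a₂ * dot c.n (c.A₃ - c.D)) := by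
      linear_combination 2 * hc1 - 2 * hc3
    have heqw : (Mπ j 0 - Mm j 0) * (c.A₃ 0 - c.A₂ 0)
        + (Mπ j 1 - Mm j 1) * (c.A₃ 1 - c.A₂ 1)
        = avv j * (a₁ * dot c.n (c.A₃ - c.D)) := by
      linear_combination 2 * hc2 - 2 * hc3
    have hnv : c.n 0 * (c.A₃ 0 - c.A₁ 0) + c.n 1 * (c.A₃ 1 - c.A₁ 1)
        = dot c.n (c.A₃ - c.D) - dot c.n (c.A₁ - c.D) := by
      simp only [dot, Pi.sub_apply]; ring
    have hnw : c.n 0 * (c.A₃ 0 - c.A₂ 0) + c.n 1 * (c.A₃ 1 - c.A₂ 1)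
        = dot c.n (c.A₃ - c.D) - dot c.n (c.A₂ - c.D) := by
      simp only [dot, Pi.sub_apply]; ring
    have hd1 : (Mπ j 0 - Mm j 0 - a₁ * a₂ * avv j * c.n 0) * (c.A₃ 0 - c.A₁ 0)
        + (Mπ j 1 - Mm j 1 - a₁ * a₂ * avv j * c.n 1) * (c.A₃ 1 - c.A₁ 1) = 0 := by
      linear_combination heqv - (a₁ * a₂ * avv j) * hnv - (a₂ * avv j) * ha₁S
    have hd2 : (Mπ j 0 - Mm j 0 - a₁ * a₂ * avv j * c.n 0) * (c.A₃ 0 - c.A₂ 0)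
        + (Mπ j 1 - Mm j 1 - a₁ * a₂ * avv j * c.n 1) * (c.A₃ 1 - c.A₂ 1) = 0 := by
      linear_combination heqw - (a₁ * a₂ * avv j) * hnw - (a₁ * avv j) * ha₂S
    have h1 : (Mπ j 1 - Mm j 1 - a₁ * a₂ * avv j * c.n 1)
        * det2 (c.A₂ - c.A₁) (c.A₃ - c.A₁) = 0 := by
      simp only [det2, Pi.sub_apply]
      linear_combination (c.A₃ 0 - c.A₁ 0) * hd2 - (c.A₃ 0 - c.A₂ 0) * hd1
    have := (mul_eq_zero.mp h1).resolve_right hdet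
    linear_combination this
  -- geometry: T⁺ is the triangle D E A₃
  have hTdef : c.T = convexHull ℝ {c.A₁, c.A₂, c.A₃} := rfl
  have hDT : c.D ∈ c.T := by
    rw [hTdef]
    refine segment_subset_convexHull ?_ ?_ (openSegment_subset_segment ℝ _ _ c.hD) <;> simp
  have hET : c.E ∈ c.T := by
    rw [hTdef]
    refine segment_subset_convexHull ?_ ?_ (openSegment_subset_segment ℝ _ _ c.hE) <;> simp
  have hA₃T : c.A₃ ∈ c.T := by rw [hTdef]; exact subset_convexHull _ _ (by simp)
  have hTconv : Convex ℝ c.T := by rw [hTdef]; exact convex_convexHull ℝ _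
  have hTplusEq : c.Tplus = convexHull ℝ {c.D, c.E, c.A₃} := by
    apply Set.Subset.antisymm
    · rintro x ⟨hxT, hxφ⟩
      have hxφ' : 0 ≤ dot c.n (x - c.D) := hxφ
      have hTim : c.T = (fun q : Fin 2 → ℝ =>
          c.A₁ + q 0 • (c.A₂ - c.A₁) + q 1 • (c.A₃ - c.A₁)) '' stdTri := by
        rw [hTdef, show ({c.A₁, c.A₂, c.A₃} : Set (Fin 2 → ℝ))
          = {c.A₁, c.A₁ + (c.A₂ - c.A₁), c.A₁ + (c.A₃ - c.A₁)} by simp, tri_image]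
      rw [hTim] at hxT
      obtain ⟨p, hpmem, hxp⟩ := hxT
      rw [mem_stdTri] at hpmem
      obtain ⟨hp0, hp1, hp01⟩ := hpmem
      have hx : ∀ i, x i = c.A₁ i + p 0 * (c.A₂ i - c.A₁ i) + p 1 * (c.A₃ i - c.A₁ i) := by
        intro i
        rw [← hxp]
        simp [Pi.add_apply, Pi.smul_apply, Pi.sub_apply, smul_eq_mul]
      have hφx : dot c.n (x - c.D) = dot c.n (c.A₁ - c.D)
          + p 0 * (dot c.n (c.A₂ - c.D) - dot c.n (c.A₁ - c.D))
          + p 1 * (dot c.n (c.A₃ - c.D) - dot c.n (c.A₁ - c.D)) := by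
        simp only [dot, Pi.sub_apply]
        linear_combination c.n 0 * hx 0 + c.n 1 * hx 1
      have hsum_clear : a₂ * dot c.n (c.A₃ - c.D) * (1 - p 0 - p 1)
          + a₁ * a₂ * dot c.n (x - c.D)
          = a₁ * dot c.n (c.A₃ - c.D) * (a₂ - p 0) := by
        rw [hφx]
        linear_combination a₂ * (1 - p 0 - p 1) * h1e + a₁ * p 0 * h2e
      have hvec : ∀ i : Fin 2, a₁ * dot c.n (c.A₃ - c.D) * (x i - c.D i)
          = dot c.n (c.A₃ - c.D) * (1 - p 0 - p 1) * (c.E i - c.D i)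
            + a₁ * dot c.n (x - c.D) * (c.A₃ i - c.D i) := by
        intro i
        rw [hφx, hx i, hD' i, hE' i]
        linear_combination (-(1 - p 0 - p 1) * a₂ * (c.A₃ i - c.A₂ i)) * h1e
          + (-(a₁ * p 0) * (c.A₃ i - c.A₂ i)) * h2e
      have hTpim : convexHull ℝ ({c.D, c.E, c.A₃} : Set (Fin 2 → ℝ))
          = (fun q : Fin 2 → ℝ => c.D + q 0 • (c.E - c.D) + q 1 • (c.A₃ - c.D)) '' stdTri := by
        rw [show ({c.D, c.E, c.A₃} : Set (Fin 2 → ℝ))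
          = {c.D, c.D + (c.E - c.D), c.D + (c.A₃ - c.D)} by simp, tri_image]
      rw [hTpim]
      refine ⟨![(1 - p 0 - p 1) / a₁, dot c.n (x - c.D) / dot c.n (c.A₃ - c.D)], ?_, ?_⟩
      · rw [mem_stdTri]
        refine ⟨?_, ?_, ?_⟩
        · simp only [Matrix.cons_val_zero]
          exact div_nonneg (by linarith) ha₁.le
        · simp only [Matrix.cons_val_one, Matrix.head_cons]
          exact div_nonneg hxφ' hφ₃.le
        · simp only [Matrix.cons_val_zero, Matrix.cons_val_one, Matrix.head_cons]
          rw [div_add_div _ _ (ne_of_gt ha₁) hφ₃', div_le_one (by positivity)]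
          have h1 : 0 ≤ p 0 * (a₁ * dot c.n (c.A₃ - c.D)) :=
            mul_nonneg hp0 (mul_pos ha₁ hφ₃).le
          have hkey2 : a₂ * ((1 - p 0 - p 1) * dot c.n (c.A₃ - c.D)
                + a₁ * dot c.n (x - c.D))
              ≤ a₂ * (a₁ * dot c.n (c.A₃ - c.D)) := by linarith [hsum_clear, h1]
          exact le_of_mul_le_mul_left hkey2 ha₂
      · rw [funext_iff, Fin.forall_fin_two]
        constructor
        · have hi := hvec 0
          simp only [Matrix.cons_val_zero, Matrix.cons_val_one, Matrix.head_cons,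
            Pi.add_apply, Pi.smul_apply, Pi.sub_apply, smul_eq_mul]
          field_simp
          linear_combination -hi
        · have hi := hvec 1
          simp only [Matrix.cons_val_zero, Matrix.cons_val_one, Matrix.head_cons,
            Pi.add_apply, Pi.smul_apply, Pi.sub_apply, smul_eq_mul]
          field_simp
          linear_combination -hi
    · apply convexHull_min
      · rintro z (rfl | rfl | rfl)
        · exact ⟨hDT, by simp [Set.mem_setOf_eq, dot]⟩
        · exact ⟨hET, by simp only [Set.mem_setOf_eq]; exact le_of_eq c.hn_orth.symm⟩
        · exact ⟨hA₃T, by simp only [Set.mem_setOf_eq]; exact hφ₃.le⟩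
      · intro x hx y hy α β hα hβ hαβ
        refine ⟨hTconv hx.1 hy.1 hα hβ hαβ, ?_⟩
        have hx2 : (0:ℝ) ≤ dot c.n (x - c.D) := hx.2
        have hy2 : (0:ℝ) ≤ dot c.n (y - c.D) := hy.2
        show (0:ℝ) ≤ dot c.n (α • x + β • y - c.D)
        rw [dot_combo c.n c.D x y hαβ]
        exact add_nonneg (mul_nonneg hα hx2) (mul_nonneg hβ hy2)
  -- areas
  have hdetp : det2 (c.E - c.D) (c.A₃ - c.D)
      = -(a₁ * a₂) * det2 (c.A₂ - c.A₁) (c.A₃ - c.A₁) := by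
    simp only [det2, Pi.sub_apply]
    rw [hE' 0, hE' 1, hD' 0, hD' 1]
    ring
  have hvolT : volume c.T
      = ENNReal.ofReal |det2 (c.A₂ - c.A₁) (c.A₃ - c.A₁)| * volume stdTri := by
    rw [hTdef, volume_tri']
  have hvolP : volume c.Tplus
      = ENNReal.ofReal |det2 (c.E - c.D) (c.A₃ - c.D)| * volume stdTri := by
    rw [hTplusEq, volume_tri']
  have hareaP : area c.Tplus = (a₁ * a₂) * area c.T := by
    unfold area
    rw [hvolP, hvolT, hdetp, neg_mul, abs_neg, abs_mul, abs_of_pos (mul_pos ha₁ ha₂),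
      ENNReal.ofReal_mul (mul_pos ha₁ ha₂).le, ENNReal.toReal_mul, ENNReal.toReal_mul,
      ENNReal.toReal_mul, ENNReal.toReal_ofReal (mul_pos ha₁ ha₂).le,
      ENNReal.toReal_ofReal (abs_nonneg _)]
    ring
  have hTcpt : IsCompact c.T := by
    rw [hTdef]; exact (Set.toFinite _).isCompact_convexHull ℝ
  have hcontφ : Continuous fun x : Fin 2 → ℝ => dot c.n (x - c.D) := by
    simp only [dot, Pi.sub_apply]
    exact (continuous_const.mul ((continuous_apply 0).sub continuous_const)).add
      (continuous_const.mul ((continuous_apply 1).sub continuous_const))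
  have hTmeas : MeasurableSet c.T := hTcpt.isClosed.measurableSet
  have hPmeas : MeasurableSet c.Tplus :=
    hTmeas.inter (isClosed_le continuous_const hcontφ).measurableSet
  have hMmeas : MeasurableSet c.Tminus :=
    hTmeas.inter (isClosed_le hcontφ continuous_const).measurableSet
  have hUnion : c.Tplus ∪ c.Tminus = c.T := by
    unfold CutTriangle.Tplus CutTriangle.Tminus
    ext z
    simp only [Set.mem_union, Set.mem_inter_iff, Set.mem_setOf_eq]
    constructor
    · rintro (⟨h, _⟩ | ⟨h, _⟩) <;> exact h
    · intro h
      rcases le_total 0 (dot c.n (z - c.D)) with h' | h'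
      · exact Or.inl ⟨h, h'⟩
      · exact Or.inr ⟨h, h'⟩
  have hplane : volume {z : Fin 2 → ℝ | dot c.n (z - c.D) = 0} = 0 := by
    set f : (Fin 2 → ℝ) →ₗ[ℝ] ℝ :=
      { toFun := fun y => dot c.n y,
        map_add' := by intro y z; simp [dot]; ring,
        map_smul' := by intro r y; simp [dot]; ring } with hfdef
    have hker : {z : Fin 2 → ℝ | dot c.n (z - c.D) = 0}
        = c.D +ᵥ ((LinearMap.ker f : Submodule ℝ (Fin 2 → ℝ)) : Set (Fin 2 → ℝ)) := by
      ext z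
      simp only [Set.mem_setOf_eq, Set.mem_vadd_set, SetLike.mem_coe, LinearMap.mem_ker]
      constructor
      · intro h
        refine ⟨z - c.D, h, ?_⟩
        simp [vadd_eq_add]
      · rintro ⟨y, hy, rfl⟩
        simpa [vadd_eq_add] using (show dot c.n y = 0 from hy)
    rw [hker, measure_vadd]
    refine Measure.addHaar_submodule volume _ ?_
    intro htop
    have hm : c.n ∈ LinearMap.ker f := by rw [htop]; trivial
    have hm2 : dot c.n c.n = 0 := LinearMap.mem_ker.mp hm
    rw [c.hn_unit] at hm2
    exact one_ne_zero hm2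
  have hInter : volume (c.Tplus ∩ c.Tminus) = 0 := by
    refine measure_mono_null ?_ hplane
    rintro z ⟨⟨_, h1⟩, ⟨_, h2⟩⟩
    exact le_antisymm h2 h1
  have hPfin : volume c.Tplus ≠ ⊤ :=
    (lt_of_le_of_lt (measure_mono (show c.Tplus ⊆ c.T from fun z hz => hz.1))
      hTcpt.measure_lt_top).ne
  have hMfin : volume c.Tminus ≠ ⊤ :=
    (lt_of_le_of_lt (measure_mono (show c.Tminus ⊆ c.T from fun z hz => hz.1))
      hTcpt.measure_lt_top).ne
  have hsum : area c.Tplus + area c.Tminus = area c.T := by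
    unfold area
    rw [← ENNReal.toReal_add hPfin hMfin]
    congr 1
    have h := measure_union_add_inter (μ := volume) c.Tplus hMmeas
    rw [hUnion, hInter, add_zero] at h
    exact h.symm
  have hareaM : area c.Tminus = (1 - a₁ * a₂) * area c.T := by
    linear_combination hsum - hareaP
  -- final convexity estimate
  have hTnn : 0 ≤ area c.T := ENNReal.toReal_nonneg
  have hθ0 : (0:ℝ) ≤ a₁ * a₂ := (mul_pos ha₁ ha₂).le
  have hθ1 : a₁ * a₂ ≤ 1 :=
    le_trans (mul_le_mul ha₁1.le ha₂1.le ha₂.le zero_le_one) (by norm_num)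
  have hfrob : frobSq Mπ ≤ (a₁ * a₂) * frobSq Mp + (1 - a₁ * a₂) * frobSq Mm := by
    simp only [frobSq, Fin.sum_univ_two]
    rw [hMπ0 0, hMπ0 1, hMπ1 0, hMπ1 1, hMpm0 0, hMpm0 1, hMpm1 0, hMpm1 1]
    linarith [convex_sq_combo (m := Mm 0 0) (p := avv 0 * c.n 0) hθ0 hθ1,
      convex_sq_combo (m := Mm 0 1) (p := avv 0 * c.n 1) hθ0 hθ1,
      convex_sq_combo (m := Mm 1 0) (p := avv 1 * c.n 0) hθ0 hθ1,
      convex_sq_combo (m := Mm 1 1) (p := avv 1 * c.n 1) hθ0 hθ1]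
  rw [hareaP, hareaM]
  have hmul := mul_le_mul_of_nonneg_right hfrob hTnn
  exact le_trans hmul (le_of_eq (by ring))


end StokesIFE
end
end

section
/- For all μ⁺, μ⁻ > 0 and ϱ > 0 there exists a constant C > 0 depending only on μ⁺, μ⁻ and ϱ with the following property (trace inequality for IFE functions): for every ϱ-shape-regular triangle T, every cut configuration (D, E, n, T⁺, T⁻) as in the setup, and every local IFE pair (v⁺, v⁻, q⁺, q⁻), the piecewise-constant gradient of the piecewise velocity satisfies ‖∇v⁺‖_F² · ℓ(∂T ∩ T⁺) + ‖∇v⁻‖_F² · ℓ(∂T ∩ T⁻) ≤ C h_T⁻¹ (‖∇v⁺‖_F² |T⁺| + ‖∇v⁻‖_F² |T⁻|), where ℓ(∂T ∩ T±) denotes the total arclength of the part of the boundary of T lying in T±. -/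
/-!
The jump conditions make the two gradients comparable. By (J2) and (J3) the jump
`∇v⁺ − ∇v⁻` annihilates the tangent `t` and is traceless, so it equals `β t nᵀ`, with
Frobenius norm `|β|` and shear strain `⟨t, ε(·) n⟩ = β/2`. The pressure does not enter the
tangential component of (J1), which therefore reads `μ⁺ β = 2 (μ⁻ − μ⁺) ⟨t, ε(∇v⁻) n⟩`;
hence `‖∇v⁺‖_F² ≤ K ‖∇v⁻‖_F²` and symmetrically, with `K` depending only on `μ±`.
Since `∂T ∩ T±` has length at most `3 h_T` and shape regularity gives
`h_T² ≤ 2ϱ |T| ≤ 2ϱ (|T⁺| + |T⁻|)`, both sides of the inequality are comparable to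
`(‖∇v⁺‖_F² + ‖∇v⁻‖_F²) h_T`.
-/

open MeasureTheory

noncomputable section

namespace StokesIFE

open Matrix

section InterfaceAlgebra

variable (n : Fin 2 → ℝ)

-- `perp c.n = c.t`
def perp : Fin 2 → ℝ := ![n 1, -n 0]

def shearStrain (M : Matrix (Fin 2) (Fin 2) ℝ) : ℝ := dot (perp n) (eps M *ᵥ n)

lemma dot_self_eq (x : Fin 2 → ℝ) : dot x x = x 0 ^ 2 + x 1 ^ 2 := by
  simp only [dot]; ring

lemma frobSq_eq (M : Matrix (Fin 2) (Fin 2) ℝ) :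
    frobSq M = M 0 0 ^ 2 + M 0 1 ^ 2 + M 1 0 ^ 2 + M 1 1 ^ 2 := by
  simp only [frobSq, Fin.sum_univ_two]; ring

lemma frobSq_nonneg (M : Matrix (Fin 2) (Fin 2) ℝ) : 0 ≤ frobSq M := by
  rw [frobSq_eq]; positivity

lemma frobSq_add_le (A B : Matrix (Fin 2) (Fin 2) ℝ) :
    frobSq (A + B) ≤ 2 * frobSq A + 2 * frobSq B := by
  simp only [frobSq_eq, Matrix.add_apply]
  nlinarith [sq_nonneg (A 0 0 - B 0 0), sq_nonneg (A 0 1 - B 0 1),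
    sq_nonneg (A 1 0 - B 1 0), sq_nonneg (A 1 1 - B 1 1)]

lemma shearStrain_eq (M : Matrix (Fin 2) (Fin 2) ℝ) :
    shearStrain n M =
      (M 0 0 - M 1 1) * (n 0 * n 1) + (M 0 1 + M 1 0) * (n 1 ^ 2 - n 0 ^ 2) / 2 := by
  simp only [shearStrain, perp, dot, eps, mulVec, dotProduct, Fin.sum_univ_two, Matrix.smul_apply,
    Matrix.add_apply, transpose_apply, smul_eq_mul, cons_val_zero, cons_val_one, cons_val_fin_one]
  ring

lemma shearStrain_sub (A B : Matrix (Fin 2) (Fin 2) ℝ) :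
    shearStrain n (A - B) = shearStrain n A - shearStrain n B := by
  simp only [shearStrain_eq, Matrix.sub_apply]; ring

/-- The pressure drops out of the tangential traction because `t ⊥ n`. -/
lemma dot_perp_sig_mulVec (μ q : ℝ) (M : Matrix (Fin 2) (Fin 2) ℝ) :
    dot (perp n) (sig μ M q *ᵥ n) = 2 * μ * shearStrain n M := by
  simp only [shearStrain, sig, perp, dot, eps, mulVec, dotProduct, Fin.sum_univ_two,
    Matrix.sub_apply, Matrix.smul_apply, Matrix.add_apply, transpose_apply, smul_eq_mul,
    one_apply_eq, one_apply_ne zero_ne_one, one_apply_ne one_ne_zero, cons_val_zero, cons_val_one,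
    cons_val_fin_one]
  ring

variable {n}

/-- In the orthonormal frame `(n, t)` the off-diagonal entries of `ε(M)` both equal
`shearStrain n M`. -/
lemma two_mul_sq_shearStrain_le (hn : dot n n = 1) (M : Matrix (Fin 2) (Fin 2) ℝ) :
    2 * shearStrain n M ^ 2 ≤ frobSq M := by
  rw [dot_self_eq] at hn
  have hn4 : ((M 0 0 - M 1 1) ^ 2 + (M 0 1 + M 1 0) ^ 2) * ((n 0 ^ 2 + n 1 ^ 2) ^ 2 - 1) = 0 := by
    rw [hn]; ring
  rw [shearStrain_eq, frobSq_eq]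
  nlinarith [sq_nonneg (M 0 0 + M 1 1), sq_nonneg (M 0 1 - M 1 0),
    sq_nonneg ((M 0 0 - M 1 1) * (n 1 ^ 2 - n 0 ^ 2) / 2 - (M 0 1 + M 1 0) * (n 0 * n 1))]

lemma eq_smul_perp_of_dot_eq_zero (hn : dot n n = 1) {v : Fin 2 → ℝ} (hv : dot n v = 0) :
    v = dot (perp n) v • perp n := by
  rw [dot_self_eq] at hn
  simp only [dot] at hv
  ext i
  fin_cases i
  · show v 0 = (n 1 * v 0 + -n 0 * v 1) * n 1
    linear_combination n 0 * hv - v 0 * hn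
  · show v 1 = (n 1 * v 0 + -n 0 * v 1) * -n 0
    linear_combination n 1 * hv - v 1 * hn

lemma mulVec_perp_eq_zero (hn : dot n n = 1) {B : Matrix (Fin 2) (Fin 2) ℝ} {v : Fin 2 → ℝ}
    (hv : v ≠ 0) (hnv : dot n v = 0) (hBv : B *ᵥ v = 0) : B *ᵥ perp n = 0 := by
  rw [eq_smul_perp_of_dot_eq_zero hn hnv] at hv hBv
  rw [mulVec_smul] at hBv
  exact (smul_eq_zero.mp hBv).resolve_left (left_ne_zero_of_smul hv)

/-- A traceless `B` with `B t = 0` is `β t nᵀ`, whose shear strain is `β / 2`. -/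
lemma frobSq_eq_four_mul_sq_shearStrain (hn : dot n n = 1) {B : Matrix (Fin 2) (Fin 2) ℝ}
    (hBt : B *ᵥ perp n = 0) (htr : B.trace = 0) :
    frobSq B = 4 * shearStrain n B ^ 2 := by
  rw [dot_self_eq] at hn
  have h1 : B 0 0 * n 1 - B 0 1 * n 0 = 0 := by
    simpa [perp, mulVec, dotProduct, Fin.sum_univ_two, ← sub_eq_add_neg] using congrFun hBt 0
  have h2 : B 1 0 * n 1 - B 1 1 * n 0 = 0 := by
    simpa [perp, mulVec, dotProduct, Fin.sum_univ_two, ← sub_eq_add_neg] using congrFun hBt 1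
  have h3 : B 0 0 + B 1 1 = 0 := by simpa [trace, Fin.sum_univ_two] using htr
  set β := n 1 * (B 0 0 * n 0 + B 0 1 * n 1) - n 0 * (B 1 0 * n 0 + B 1 1 * n 1)
  have g00 : B 0 0 = β * (n 0 * n 1) := by
    linear_combination n 1 ^ 3 * h1 + n 0 ^ 3 * h2 + n 0 ^ 2 * (n 0 ^ 2 + n 1 ^ 2) * h3
      - B 0 0 * (n 0 ^ 2 + n 1 ^ 2 + 1) * hn
  have g01 : B 0 1 = β * n 1 ^ 2 := by
    linear_combination (-(n 0 * (2 * n 1 ^ 2 + n 0 ^ 2))) * h1 + n 0 ^ 2 * n 1 * h2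
      + (n 0 ^ 2 + n 1 ^ 2) * n 0 * n 1 * h3 - B 0 1 * (n 0 ^ 2 + n 1 ^ 2 + 1) * hn
  have g10 : B 1 0 = -(β * n 0 ^ 2) := by
    linear_combination (-(n 1 ^ 2 * n 0)) * h1 + n 1 * (2 * n 0 ^ 2 + n 1 ^ 2) * h2
      + (n 0 ^ 2 + n 1 ^ 2) * n 0 * n 1 * h3 - B 1 0 * (n 0 ^ 2 + n 1 ^ 2 + 1) * hn
  have g11 : B 1 1 = -(β * (n 0 * n 1)) := by
    linear_combination (-(n 1 ^ 3)) * h1 - n 0 ^ 3 * h2 + n 1 ^ 2 * (n 0 ^ 2 + n 1 ^ 2) * h3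
      - B 1 1 * (n 0 ^ 2 + n 1 ^ 2 + 1) * hn
  clear_value β
  rw [frobSq_eq, shearStrain_eq, g00, g01, g10, g11]
  linear_combination -β ^ 2 * (n 0 ^ 2 + n 1 ^ 2) ^ 2 * (n 0 ^ 2 + n 1 ^ 2 + 1) * hn

lemma frobSq_le_of_interface {μp μm : ℝ} (hμp : 0 < μp) (hn : dot n n = 1)
    {Mp Mm : Matrix (Fin 2) (Fin 2) ℝ} (hker : (Mp - Mm) *ᵥ perp n = 0)
    (htr : Mp.trace = Mm.trace) (hshear : μp * shearStrain n Mp = μm * shearStrain n Mm) :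
    frobSq Mp ≤ (2 + 4 * ((μm - μp) / μp) ^ 2) * frobSq Mm := by
  have hjump : frobSq (Mp - Mm) = 4 * shearStrain n (Mp - Mm) ^ 2 :=
    frobSq_eq_four_mul_sq_shearStrain hn hker (by rw [trace_sub, htr, sub_self])
  have hs : shearStrain n (Mp - Mm) = (μm - μp) / μp * shearStrain n Mm := by
    rw [shearStrain_sub]
    field_simp
    linear_combination hshear
  calc frobSq Mp ≤ 2 * frobSq Mm + 2 * frobSq (Mp - Mm) := by
        simpa using frobSq_add_le Mm (Mp - Mm)
    _ = 2 * frobSq Mm + 4 * ((μm - μp) / μp) ^ 2 * (2 * shearStrain n Mm ^ 2) := by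
        rw [hjump, hs]; ring
    _ ≤ 2 * frobSq Mm + 4 * ((μm - μp) / μp) ^ 2 * frobSq Mm := by
        gcongr; exact two_mul_sq_shearStrain_le hn Mm
    _ = (2 + 4 * ((μm - μp) / μp) ^ 2) * frobSq Mm := by ring

end InterfaceAlgebra

lemma len_pos {x : Fin 2 → ℝ} (hx : x ≠ 0) : 0 < len x := by
  have hx' : x 0 ≠ 0 ∨ x 1 ≠ 0 := by
    by_contra! h
    exact hx (funext fun i => by fin_cases i <;> simp [h.1, h.2])
  apply Real.sqrt_pos.mpr
  rw [dot_self_eq]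
  rcases hx' with h | h <;> positivity

lemma toReal_volume_le_one {s : Set ℝ} (hs : s ⊆ Set.Icc 0 1) : (volume s).toReal ≤ 1 := by
  simpa using ENNReal.toReal_mono (by simp) (measure_mono (μ := volume) hs)

namespace CutTriangle

variable (c : CutTriangle)

lemma D_ne_E : c.D ≠ c.E := by
  intro hDE
  obtain ⟨a, b, -, -, hab, hD⟩ := c.hD
  obtain ⟨a', b', ha', -, hab', hE⟩ := c.hE
  have hcomb : a' • c.A₁ - a • c.A₂ + (b' - b) • c.A₃ = 0 := by
    rw [sub_smul, ← sub_eq_zero.mpr (hE.trans (hDE.symm.trans hD.symm))]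
    module
  have := affineIndependent_iff.mp c.indep Finset.univ ![a', -a, b' - b]
    (by simp only [Fin.sum_univ_three, cons_val_zero, cons_val_one, cons_val]; linarith)
    (by simpa [Fin.sum_univ_three, ← sub_eq_add_neg] using hcomb) 0 (Finset.mem_univ _)
  exact ha'.ne' (by simpa using this)

lemma hT_pos : 0 < c.hT := by
  have h12 : c.A₁ ≠ c.A₂ := by simpa using c.indep.injective.ne (show (0 : Fin 3) ≠ 1 by decide)
  exact (len_pos (sub_ne_zero.mpr h12.symm)).trans_le (le_max_left _ _)

lemma hT_le_perim : c.hT ≤ c.perim := by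
  have h1 : 0 ≤ len (c.A₂ - c.A₁) := Real.sqrt_nonneg _
  have h2 : 0 ≤ len (c.A₃ - c.A₁) := Real.sqrt_nonneg _
  have h3 : 0 ≤ len (c.A₃ - c.A₂) := Real.sqrt_nonneg _
  simp only [hT, perim]
  exact max_le (by linarith) (max_le (by linarith) (by linarith))

lemma sum_edges_le {ℓ : (Fin 2 → ℝ) → (Fin 2 → ℝ) → ℝ} (hℓ : ∀ P Q, ℓ P Q ≤ len (Q - P)) :
    ℓ c.A₂ c.A₃ + ℓ c.A₁ c.A₃ + ℓ c.A₁ c.A₂ ≤ 3 * c.hT := by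
  have e₁ : len (c.A₃ - c.A₂) ≤ c.hT := (le_max_right _ _).trans (le_max_right _ _)
  have e₂ : len (c.A₃ - c.A₁) ≤ c.hT := (le_max_left _ _).trans (le_max_right _ _)
  have e₃ : len (c.A₂ - c.A₁) ≤ c.hT := le_max_left _ _
  linarith [hℓ c.A₂ c.A₃, hℓ c.A₁ c.A₃, hℓ c.A₁ c.A₂]

lemma edgeLenPlus_le (P Q : Fin 2 → ℝ) : c.edgeLenPlus P Q ≤ len (Q - P) :=
  mul_le_of_le_one_right (Real.sqrt_nonneg _) (toReal_volume_le_one fun _ hs => hs.1)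

lemma edgeLenMinus_le (P Q : Fin 2 → ℝ) : c.edgeLenMinus P Q ≤ len (Q - P) :=
  mul_le_of_le_one_right (Real.sqrt_nonneg _) (toReal_volume_le_one fun _ hs => hs.1)

lemma area_le_area_Tplus_add_area_Tminus : area c.T ≤ area c.Tplus + area c.Tminus := by
  have hT : volume c.T ≠ ⊤ :=
    ((Set.toFinite _).isCompact_convexHull ℝ).measure_lt_top.ne
  have hcover : c.T ⊆ c.Tplus ∪ c.Tminus := fun x hx =>
    (le_total 0 (dot c.n (x - c.D))).imp (fun h => ⟨hx, h⟩) (fun h => ⟨hx, h⟩)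
  have hplus : volume c.Tplus ≠ ⊤ := measure_ne_top_of_subset Set.inter_subset_left hT
  have hminus : volume c.Tminus ≠ ⊤ := measure_ne_top_of_subset Set.inter_subset_left hT
  rw [area, area, area, ← ENNReal.toReal_add hplus hminus]
  exact ENNReal.toReal_mono (ENNReal.add_ne_top.mpr ⟨hplus, hminus⟩)
    ((measure_mono hcover).trans (measure_union_le _ _))

-- `h_T² ≤ h_T · perimeter = 2 |T| h_T / r_T`
lemma hT_sq_le {ϱ : ℝ} (hϱ : 0 ≤ ϱ) (hreg : c.ShapeReg ϱ) :
    c.hT ^ 2 ≤ 2 * ϱ * (area c.Tplus + area c.Tminus) := by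
  have hperim : 0 < c.perim := c.hT_pos.trans_le c.hT_le_perim
  have hreg' : c.hT * c.perim ≤ 2 * ϱ * area c.T := by
    rw [← le_div_iff₀ hperim]
    calc c.hT ≤ ϱ * (2 * area c.T / c.perim) := hreg
      _ = 2 * ϱ * area c.T / c.perim := by ring
  calc c.hT ^ 2 ≤ c.hT * c.perim := by
        rw [sq]; exact mul_le_mul_of_nonneg_left c.hT_le_perim c.hT_pos.le
    _ ≤ 2 * ϱ * area c.T := hreg'
    _ ≤ 2 * ϱ * (area c.Tplus + area c.Tminus) := by
        gcongr; exact c.area_le_area_Tplus_add_area_Tminus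

lemma weighted_bdryLen_le {ϱ : ℝ} (hϱ : 0 ≤ ϱ) (hreg : c.ShapeReg ϱ) {P m : ℝ} (hP : 0 ≤ P)
    (hm : 0 ≤ m) : P * c.bdryLenPlus + m * c.bdryLenMinus ≤
      6 * ϱ * c.hT⁻¹ * ((P + m) * (area c.Tplus + area c.Tminus)) := by
  have hh := c.hT_pos
  have hplus := c.sum_edges_le c.edgeLenPlus_le
  have hminus := c.sum_edges_le c.edgeLenMinus_le
  have hsq := c.hT_sq_le hϱ hreg
  calc P * c.bdryLenPlus + m * c.bdryLenMinus ≤ 3 * (P + m) * c.hT ^ 2 * c.hT⁻¹ := by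
        rw [bdryLenPlus, bdryLenMinus, sq, mul_assoc, mul_inv_cancel_right₀ hh.ne']
        nlinarith
    _ ≤ 3 * (P + m) * (2 * ϱ * (area c.Tplus + area c.Tminus)) * c.hT⁻¹ := by gcongr
    _ = _ := by ring

end CutTriangle

lemma add_mul_add_le_of_le_mul {K P m a b : ℝ} (hK : 1 ≤ K) (hP : 0 ≤ P) (hm : 0 ≤ m)
    (ha : 0 ≤ a) (hb : 0 ≤ b) (hPm : P ≤ K * m) (hmP : m ≤ K * P) :
    (P + m) * (a + b) ≤ 2 * K * (P * a + m * b) := by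
  nlinarith [mul_le_mul_of_nonneg_left hK (mul_nonneg hP ha),
    mul_le_mul_of_nonneg_left hK (mul_nonneg hm hb),
    mul_le_mul_of_nonneg_right hPm hb, mul_le_mul_of_nonneg_right hmP ha]

namespace CutTriangle.IsIFEPair

variable {c : CutTriangle} {μp μm : ℝ} {Mp Mm : Matrix (Fin 2) (Fin 2) ℝ} {bp bm : Fin 2 → ℝ}
  {qp qm : ℝ}

lemma symm (h : c.IsIFEPair μp μm Mp bp Mm bm qp qm) : c.IsIFEPair μm μp Mm bm Mp bp qm qp :=
  ⟨h.1.symm, fun x hx => (h.2.1 x hx).symm, h.2.2.symm⟩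

lemma sub_mulVec_perp_eq_zero (h : c.IsIFEPair μp μm Mp bp Mm bm qp qm) :
    (Mp - Mm) *ᵥ perp c.n = 0 := by
  have hD := h.2.1 c.D (left_mem_segment ℝ c.D c.E)
  have hE := h.2.1 c.E (right_mem_segment ℝ c.D c.E)
  have hDE : (Mp - Mm) *ᵥ (c.E - c.D) = 0 := by
    rw [sub_mulVec, mulVec_sub, mulVec_sub]
    linear_combination (norm := module) hE - hD
  exact mulVec_perp_eq_zero c.hn_unit (sub_ne_zero.mpr c.D_ne_E.symm) c.hn_orth hDE

lemma mul_shearStrain_eq (h : c.IsIFEPair μp μm Mp bp Mm bm qp qm) :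
    μp * shearStrain c.n Mp = μm * shearStrain c.n Mm := by
  have htraction := congrArg (dot (perp c.n)) h.1
  rw [dot_perp_sig_mulVec, dot_perp_sig_mulVec] at htraction
  linarith

lemma frobSq_le (h : c.IsIFEPair μp μm Mp bp Mm bm qp qm) (hμp : 0 < μp) :
    frobSq Mp ≤ (2 + 4 * ((μm - μp) / μp) ^ 2) * frobSq Mm :=
  frobSq_le_of_interface hμp c.hn_unit h.sub_mulVec_perp_eq_zero h.2.2 h.mul_shearStrain_eq

end CutTriangle.IsIFEPair

/-- trace inequality for IFE functions: for all `μ⁺, μ⁻ > 0` and `ϱ > 0`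
there is `C > 0` depending only on `μ⁺, μ⁻, ϱ` such that for every `ϱ`-shape-regular cut
triangle and every local IFE pair,
`‖∇v⁺‖_F² ℓ(∂T ∩ T⁺) + ‖∇v⁻‖_F² ℓ(∂T ∩ T⁻) ≤ C h_T⁻¹ (‖∇v⁺‖_F² |T⁺| + ‖∇v⁻‖_F² |T⁻|)`. -/
theorem statement10 (μp μm ϱ : ℝ) (hμp : 0 < μp) (hμm : 0 < μm) (hϱ : 0 < ϱ) :
    ∃ C : ℝ, 0 < C ∧ ∀ (c : CutTriangle), c.ShapeReg ϱ →
      ∀ (Mp Mm : Matrix (Fin 2) (Fin 2) ℝ) (bp bm : Fin 2 → ℝ) (qp qm : ℝ),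
        c.IsIFEPair μp μm Mp bp Mm bm qp qm →
        frobSq Mp * c.bdryLenPlus + frobSq Mm * c.bdryLenMinus ≤
          C * (c.hT)⁻¹ * (frobSq Mp * area c.Tplus + frobSq Mm * area c.Tminus) := by
  set K := max (2 + 4 * ((μm - μp) / μp) ^ 2) (2 + 4 * ((μp - μm) / μm) ^ 2)
  have hK : 1 ≤ K := le_max_of_le_left (by nlinarith [sq_nonneg ((μm - μp) / μp)])
  refine ⟨12 * K * ϱ, by positivity, fun c hreg Mp Mm bp bm qp qm hIFE => ?_⟩
  have hPm : frobSq Mp ≤ K * frobSq Mm :=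
    (hIFE.frobSq_le hμp).trans (by gcongr; exacts [frobSq_nonneg _, le_max_left _ _])
  have hmP : frobSq Mm ≤ K * frobSq Mp :=
    (hIFE.symm.frobSq_le hμm).trans (by gcongr; exacts [frobSq_nonneg _, le_max_right _ _])
  have hcoef : 0 ≤ 6 * ϱ * c.hT⁻¹ := by have := c.hT_pos; positivity
  calc frobSq Mp * c.bdryLenPlus + frobSq Mm * c.bdryLenMinus
      ≤ 6 * ϱ * c.hT⁻¹ * ((frobSq Mp + frobSq Mm) * (area c.Tplus + area c.Tminus)) :=
        c.weighted_bdryLen_le hϱ.le hreg (frobSq_nonneg _) (frobSq_nonneg _)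
    _ ≤ 6 * ϱ * c.hT⁻¹ * (2 * K * (frobSq Mp * area c.Tplus + frobSq Mm * area c.Tminus)) :=
        mul_le_mul_of_nonneg_left (add_mul_add_le_of_le_mul hK (frobSq_nonneg _)
          (frobSq_nonneg _) ENNReal.toReal_nonneg ENNReal.toReal_nonneg hPm hmP) hcoef
    _ = 12 * K * ϱ * c.hT⁻¹ * (frobSq Mp * area c.Tplus + frobSq Mm * area c.Tminus) := by
        ring

end StokesIFE
end
end
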